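/- Let σ be nondegenerate antisymmetric and let L and M be formal Laurent series in z with values in sp(2n, ℂ), L = ν α α^tσ/z² + (αβ^t + βα^t)σ/z + L_0 + L_1 z + L_2 z² + ..., M = λ α α^tσ/z² + (αμ^t + μα^t)σ/z + M_0 + M_1 z + M_2 z² + M_3 z³ + ..., with α^tσα = 0, β^tσα = 0, μ^tσα = 0, L_0 α = κ_L α, M_0 α = κ_M α, α^tσL_1α = 0, and α^tσM_1α = 0. Then α^tσ [L, M]_1 α = 0, where [L,M]_1 denotes the coefficient of z¹ in the commutator [L, M]. -/
import Mathlib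


open Matrix

lemma aux_term {N : ℕ} (σ : Matrix (Fin N) (Fin N) ℂ) (hσskew : σᵀ = -σ)
    (α β μ : Matrix (Fin N) (Fin 1) ℂ) (lam ν κL κM : ℂ)
    (A B : ℤ → Matrix (Fin N) (Fin N) ℂ)
    (hA0sp : (A 0)ᵀ * σ + σ * A 0 = 0)
    (hAlow : ∀ k : ℤ, k < -2 → A k = 0) (hBlow : ∀ k : ℤ, k < -2 → B k = 0)
    (hA2 : A (-2) = ν • (α * αᵀ * σ)) (hA1 : A (-1) = (α * βᵀ + β * αᵀ) * σ)
    (hB2 : B (-2) = lam • (α * αᵀ * σ)) (hB1 : B (-1) = (α * μᵀ + μ * αᵀ) * σ)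
    (hiso : αᵀ * σ * α = 0) (hβ : βᵀ * σ * α = 0) (hμ : μᵀ * σ * α = 0)
    (hAeig : A 0 * α = κL • α) (hBeig : B 0 * α = κM • α)
    (hA1iso : αᵀ * σ * A 1 * α = 0) (hB1iso : αᵀ * σ * B 1 * α = 0)
    (i j : ℤ) (hij : i + j = 1) :
    αᵀ * σ * (A i * B j) * α = 0 := by
  -- αᵀ σ β = 0 from βᵀ σ α = 0 and skewness
  have hβ' : αᵀ * σ * β = 0 := by
    have h : (βᵀ * σ * α)ᵀ = -(αᵀ * σ * β) := by
      rw [Matrix.transpose_mul, Matrix.transpose_mul, Matrix.transpose_transpose, hσskew]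
      simp [Matrix.mul_assoc]
    rw [hβ, Matrix.transpose_zero] at h
    exact neg_eq_zero.mp h.symm
  -- B(-1) α = 0 and B(-2) α = 0
  have hBm1 : B (-1) * α = 0 := by
    rw [hB1, Matrix.mul_assoc, Matrix.add_mul]
    have h1 : α * βᵀ * (σ * α) = 0 ∨ True := Or.inr trivial
    have e1 : α * μᵀ * (σ * α) = α * (μᵀ * σ * α) := by
      simp [Matrix.mul_assoc]
    have e2 : μ * αᵀ * (σ * α) = μ * (αᵀ * σ * α) := by
      simp [Matrix.mul_assoc]
    rw [e1, e2, hμ, hiso, Matrix.mul_zero, Matrix.mul_zero, add_zero]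
  have hBm2 : B (-2) * α = 0 := by
    rw [hB2, Matrix.smul_mul]
    have e : α * αᵀ * σ * α = α * (αᵀ * σ * α) := by simp [Matrix.mul_assoc]
    rw [e, hiso, Matrix.mul_zero, smul_zero]
  -- αᵀ σ A 0 = (-κL) • (αᵀ σ)
  have hA0 : αᵀ * σ * A 0 = (-κL) • (αᵀ * σ) := by
    have hσA : σ * A 0 = -((A 0)ᵀ * σ) := by linear_combination (norm := module) hA0sp
    have h : αᵀ * (σ * A 0) = -(αᵀ * (A 0)ᵀ * σ) := by
      rw [hσA, Matrix.mul_neg, Matrix.mul_assoc]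
    have h2 : αᵀ * (A 0)ᵀ = κL • αᵀ := by
      rw [← Matrix.transpose_mul, hAeig, Matrix.transpose_smul]
    rw [Matrix.mul_assoc, h, h2, Matrix.smul_mul, neg_smul]
  have hcase : i < -2 ∨ i = -2 ∨ i = -1 ∨ i = 0 ∨ i = 1 ∨ j = -1 ∨ j = -2 ∨ j < -2 := by
    omega
  rcases hcase with h | h | h | h | h | h | h | h
  · rw [hAlow i h]; simp
  · subst h
    rw [hA2, Matrix.smul_mul, Matrix.mul_smul, Matrix.smul_mul]
    have e : αᵀ * σ * (α * αᵀ * σ * B j) * α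
        = αᵀ * σ * α * (αᵀ * σ * B j * α) := by
      simp [Matrix.mul_assoc]
    rw [e, hiso, Matrix.zero_mul, smul_zero]
  · subst h
    rw [hA1]
    have e : αᵀ * σ * ((α * βᵀ + β * αᵀ) * σ * B j) * α
        = αᵀ * σ * α * (βᵀ * σ * B j * α) + αᵀ * σ * β * (αᵀ * σ * B j * α) := by
      simp [Matrix.mul_assoc, Matrix.add_mul, Matrix.mul_add]
    rw [e, hiso, hβ', Matrix.zero_mul, Matrix.zero_mul, add_zero]
  · subst h
    have hj : j = 1 := by omega
    subst hj
    have e : αᵀ * σ * (A 0 * B 1) * α = αᵀ * σ * A 0 * (B 1 * α) := by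
      simp [Matrix.mul_assoc]
    rw [e, hA0, Matrix.smul_mul]
    have e2 : αᵀ * σ * (B 1 * α) = αᵀ * σ * B 1 * α := by simp [Matrix.mul_assoc]
    rw [e2, hB1iso, smul_zero]
  · subst h
    have hj : j = 0 := by omega
    subst hj
    have e : αᵀ * σ * (A 1 * B 0) * α = αᵀ * σ * A 1 * (B 0 * α) := by
      simp [Matrix.mul_assoc]
    rw [e, hBeig, Matrix.mul_smul, hA1iso, smul_zero]
  · subst h
    have e : αᵀ * σ * (A i * B (-1)) * α = αᵀ * σ * A i * (B (-1) * α) := by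
      simp [Matrix.mul_assoc]
    rw [e, hBm1, Matrix.mul_zero]
  · subst h
    have e : αᵀ * σ * (A i * B (-2)) * α = αᵀ * σ * A i * (B (-2) * α) := by
      simp [Matrix.mul_assoc]
    rw [e, hBm2, Matrix.mul_zero]
  · rw [hBlow j h]; simp

/-- in the symplectic case (σ nondegenerate antisymmetric, all
Laurent coefficients of L and M in sp(2n, ℂ)), with
L = ν ααᵗσ z⁻² + (αβᵗ + βαᵗ)σ z⁻¹ + L₀ + L₁z + …,
M = λ ααᵗσ z⁻² + (αμᵗ + μαᵗ)σ z⁻¹ + M₀ + M₁z + …,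
αᵗσα = 0, βᵗσα = 0, μᵗσα = 0, L₀α = κ_L α, M₀α = κ_M α,
αᵗσL₁α = 0 and αᵗσM₁α = 0, one has αᵗσ [L,M]₁ α = 0,
where [L,M]₁ is the z¹-coefficient of the commutator. -/
theorem commutator_coeff_one_isotropic (n : ℕ)
    (σ : Matrix (Fin (2 * n)) (Fin (2 * n)) ℂ)
    (hσskew : σᵀ = -σ) (hσne : IsUnit σ)
    (α β μ : Matrix (Fin (2 * n)) (Fin 1) ℂ) (lam ν κL κM : ℂ)
    (L M : HahnSeries ℤ (Matrix (Fin (2 * n)) (Fin (2 * n)) ℂ))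
    (hLsp : ∀ k : ℤ, (L.coeff k)ᵀ * σ + σ * L.coeff k = 0)
    (hMsp : ∀ k : ℤ, (M.coeff k)ᵀ * σ + σ * M.coeff k = 0)
    (hLlow : ∀ k : ℤ, k < -2 → L.coeff k = 0)
    (hMlow : ∀ k : ℤ, k < -2 → M.coeff k = 0)
    (hL2 : L.coeff (-2) = ν • (α * αᵀ * σ))
    (hL1 : L.coeff (-1) = (α * βᵀ + β * αᵀ) * σ)
    (hM2 : M.coeff (-2) = lam • (α * αᵀ * σ))
    (hM1 : M.coeff (-1) = (α * μᵀ + μ * αᵀ) * σ)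
    (hiso : αᵀ * σ * α = 0)
    (hβ : βᵀ * σ * α = 0) (hμ : μᵀ * σ * α = 0)
    (hLeig : L.coeff 0 * α = κL • α) (hMeig : M.coeff 0 * α = κM • α)
    (hL1iso : αᵀ * σ * L.coeff 1 * α = 0)
    (hM1iso : αᵀ * σ * M.coeff 1 * α = 0) :
    αᵀ * σ * ((L * M - M * L).coeff 1) * α = 0 := by
  have hLM : αᵀ * σ * ((L * M).coeff 1) * α = 0 := by
    rw [HahnSeries.coeff_mul, Matrix.mul_sum, Matrix.sum_mul]
    refine Finset.sum_eq_zero fun ij hij => ?_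
    rw [Finset.mem_addAntidiagonal] at hij
    exact aux_term σ hσskew α β μ lam ν κL κM L.coeff M.coeff (hLsp 0) hLlow hMlow
      hL2 hL1 hM2 hM1 hiso hβ hμ hLeig hMeig hL1iso hM1iso ij.1 ij.2 hij.2.2
  have hML : αᵀ * σ * ((M * L).coeff 1) * α = 0 := by
    rw [HahnSeries.coeff_mul, Matrix.mul_sum, Matrix.sum_mul]
    refine Finset.sum_eq_zero fun ij hij => ?_
    rw [Finset.mem_addAntidiagonal] at hij
    exact aux_term σ hσskew α μ β ν lam κM κL M.coeff L.coeff (hMsp 0) hMlow hLlow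
      hM2 hM1 hL2 hL1 hiso hμ hβ hMeig hLeig hM1iso hL1iso ij.1 ij.2 hij.2.2
  have hsub : (L * M - M * L).coeff 1 = (L * M).coeff 1 - (M * L).coeff 1 := by
    simp
  rw [hsub, Matrix.mul_sub, Matrix.sub_mul, hLM, hML, sub_self]
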